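/- Let C be a connected combinatorial (v,b,r,k)-configuration with n-anonymous neighborhoods whose anonymity partition G = {g_1, …, g_m} (the partition of the points into classes with equal neighborhoods) satisfies |g_i| = n for all i. Then r = n if and only if m = k. -/

import Mathlib

open Finset

variable {P : Type*}

/-- Two points are collinear if they are equal or some line contains both. -/
def Collin [DecidableEq P] (L : Finset (Finset P)) (p q : P) : Prop :=
  p = q ∨ ∃ l ∈ L, p ∈ l ∧ q ∈ l

/-- The (open) neighborhood `N p` of a point `p`: the points collinear with `p`
and different from `p`. -/
def nbhd [Fintype P] [DecidableEq P] (L : Finset (Finset P)) (p : P) : Finset P :=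
  Finset.univ.filter fun q => q ≠ p ∧ ∃ l ∈ L, p ∈ l ∧ q ∈ l

/-- The closed neighborhood `CN p` of a point `p`: its neighborhood together with `p`. -/
def cnbhd [Fintype P] [DecidableEq P] (L : Finset (Finset P)) (p : P) : Finset P :=
  insert p (nbhd L p)

/-- A combinatorial `(v,b,r,k)`-configuration: `v` points, `b` lines, every line
has exactly `k ≥ 2` points, every point is on exactly `r ≥ 1` lines, and any two
distinct points are on at most one common line. -/
def IsConfiguration [Fintype P] [DecidableEq P] (L : Finset (Finset P))
    (v b r k : ℕ) : Prop :=
  Fintype.card P = v ∧ L.card = b ∧ 2 ≤ k ∧ 1 ≤ r ∧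
  (∀ l ∈ L, l.card = k) ∧
  (∀ p : P, (L.filter fun l => p ∈ l).card = r) ∧
  (∀ p q : P, p ≠ q → (L.filter fun l => p ∈ l ∧ q ∈ l).card ≤ 1)

/-- The anonymity class of a point `p`: the set of points with the same
neighborhood as `p`. -/
def anonClass [Fintype P] [DecidableEq P] (L : Finset (Finset P)) (p : P) :
    Finset P :=
  Finset.univ.filter fun q => nbhd L q = nbhd L p

/-- An incidence structure is connected if any two points are joined by a chain
of incidences. -/
def ConfigConnected [DecidableEq P] (L : Finset (Finset P)) : Prop :=
  ∀ p q : P, Relation.ReflTransGen (fun a b : P => ∃ l ∈ L, a ∈ l ∧ b ∈ l) p q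

/-!
The neighborhood `N p` is a union of anonymity classes and has `r (k - 1)` points, so it consists
of `c p = r (k - 1) / n` classes. A class inside `N p` meets each of the `r` lines through `p` at
most once, so `n ≤ r`. If `m = k`, then `c p ≤ k - 1` because the class of `p` is not among them,
which forces `r ≤ n`. If `r = n`, then `c p = k - 1`, which is also the number of classes met by
the other points of any line through `p` (no two points of a line have the same neighborhood), so
these are all the classes in `N p`. Hence the class of `p` together with `N p` is closed under
collinearity, so by connectivity it is everything, and counting gives `n m = n + n (k - 1) = n k`.
-/

section

variable [Fintype P] [DecidableEq P] (L : Finset (Finset P))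

@[simp]
lemma mem_nbhd {p q : P} : q ∈ nbhd L p ↔ q ≠ p ∧ ∃ l ∈ L, p ∈ l ∧ q ∈ l := by
  simp [nbhd]

lemma notMem_nbhd_self (p : P) : p ∉ nbhd L p := by
  simp

lemma mem_nbhd_comm {p q : P} : q ∈ nbhd L p ↔ p ∈ nbhd L q := by
  simp only [mem_nbhd]
  exact ⟨fun ⟨hne, l, hl, hp, hq⟩ => ⟨hne.symm, l, hl, hq, hp⟩,
    fun ⟨hne, l, hl, hq, hp⟩ => ⟨hne.symm, l, hl, hp, hq⟩⟩

lemma nbhd_eq_biUnion_erase (p : P) :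
    nbhd L p = {l ∈ L | p ∈ l}.biUnion (·.erase p) := by
  ext q
  simp only [mem_nbhd, mem_biUnion, mem_filter, mem_erase]
  exact ⟨fun ⟨hne, l, hl, hp, hq⟩ => ⟨l, ⟨hl, hp⟩, hne, hq⟩,
    fun ⟨l, ⟨hl, hp⟩, hne, hq⟩ => ⟨hne, l, hl, hp, hq⟩⟩

@[simp]
lemma mem_anonClass {p q : P} : q ∈ anonClass L p ↔ nbhd L q = nbhd L p := by
  simp [anonClass]

lemma mem_anonClass_self (p : P) : p ∈ anonClass L p := by
  simp

lemma card_anonClass_pos (p : P) : 0 < (anonClass L p).card :=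
  card_pos.2 ⟨p, mem_anonClass_self L p⟩

lemma anonClass_eq_anonClass_iff {p q : P} :
    anonClass L p = anonClass L q ↔ nbhd L p = nbhd L q := by
  refine ⟨fun h => (mem_anonClass L).1 (h ▸ mem_anonClass_self L p), fun h => ?_⟩
  ext x
  simp [h]

lemma anonClass_subset_nbhd {p q : P} (h : q ∈ nbhd L p) : anonClass L q ⊆ nbhd L p := by
  intro x hx
  rw [mem_nbhd_comm, (mem_anonClass L).1 hx, ← mem_nbhd_comm]
  exact h

lemma disjoint_anonClass_nbhd (p : P) : Disjoint (anonClass L p) (nbhd L p) := by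
  rw [disjoint_left]
  intro x hx hxp
  rw [← (mem_anonClass L).1 hx] at hxp
  exact notMem_nbhd_self L x hxp

-- Two points with the same neighborhood are never collinear: each would be its own neighbour.
lemma injOn_anonClass_of_mem {l : Finset P} (hl : l ∈ L) : Set.InjOn (anonClass L) l := by
  intro x hx y hy hxy
  by_contra hne
  have hxy' : x ∈ nbhd L y := (mem_nbhd L).2 ⟨hne, l, hl, hy, hx⟩
  rw [← (anonClass_eq_anonClass_iff L).1 hxy] at hxy'
  exact notMem_nbhd_self L x hxy'

lemma card_eq_mul_card_image_anonClass {n : ℕ} (hclass : ∀ p : P, (anonClass L p).card = n)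
    (T : Finset P) (hT : ∀ q ∈ T, anonClass L q ⊆ T) :
    T.card = n * (T.image (anonClass L)).card := by
  rw [card_eq_sum_card_image (anonClass L) T, mul_comm]
  refine sum_const_nat fun c hc => ?_
  obtain ⟨q, hq, rfl⟩ := mem_image.1 hc
  rw [← hclass q]
  congr 1
  ext x
  simp only [mem_filter, anonClass_eq_anonClass_iff, ← mem_anonClass]
  exact ⟨And.right, fun hx => ⟨hT q hq hx, hx⟩⟩

lemma card_image_anonClass_nbhd_lt (p : P) :
    ((nbhd L p).image (anonClass L)).card < (univ.image (anonClass L)).card := by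
  refine card_lt_card ((ssubset_iff_of_subset (image_subset_image (subset_univ _))).2
    ⟨anonClass L p, mem_image_of_mem _ (mem_univ p), fun h => ?_⟩)
  obtain ⟨q, hq, hqp⟩ := mem_image.1 h
  exact disjoint_left.1 (disjoint_anonClass_nbhd L p) (hqp ▸ mem_anonClass_self L q) hq

variable {L}

lemma ConfigConnected.eq_univ_of_forall_mem_line (hconn : ConfigConnected L)
    {S : Finset P} {p : P} (hp : p ∈ S) (hS : ∀ x ∈ S, ∀ l ∈ L, x ∈ l → ∀ y ∈ l, y ∈ S) :
    S = univ := by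
  refine eq_univ_iff_forall.2 fun q => ?_
  induction hconn p q with
  | refl => exact hp
  | tail _ hstep ih =>
    obtain ⟨l, hl, hx, hy⟩ := hstep
    exact hS _ ih l hl hx _ hy

variable {v b r k : ℕ}

lemma IsConfiguration.card_nbhd (hC : IsConfiguration L v b r k) (p : P) :
    (nbhd L p).card = r * (k - 1) := by
  obtain ⟨-, -, -, -, hline, hdeg, hpair⟩ := hC
  rw [nbhd_eq_biUnion_erase, card_biUnion, ← hdeg p, ← smul_eq_mul, ← sum_const]
  · refine sum_congr rfl fun l hl => ?_
    rw [mem_filter] at hl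
    rw [card_erase_of_mem hl.2, hline l hl.1]
  · intro l₁ h₁ l₂ h₂ hne
    rw [mem_coe, mem_filter] at h₁ h₂
    refine disjoint_left.2 fun x hx₁ hx₂ => hne ?_
    rw [mem_erase] at hx₁ hx₂
    exact card_le_one.1 (hpair p x (Ne.symm hx₁.1)) _ (mem_filter.2 ⟨h₁.1, h₁.2, hx₁.2⟩)
      _ (mem_filter.2 ⟨h₂.1, h₂.2, hx₂.2⟩)

lemma IsConfiguration.nbhd_nonempty (hC : IsConfiguration L v b r k) (p : P) :
    (nbhd L p).Nonempty := by
  have hk : 2 ≤ k := hC.2.2.1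
  have hr : 1 ≤ r := hC.2.2.2.1
  exact card_pos.1 (by rw [hC.card_nbhd]; exact Nat.mul_pos (by omega) (by omega))

lemma IsConfiguration.card_anonClass_le (hC : IsConfiguration L v b r k) (q : P) :
    (anonClass L q).card ≤ r := by
  obtain ⟨p, hp⟩ := hC.nbhd_nonempty q
  have hsub : anonClass L q ⊆ {l ∈ L | p ∈ l}.biUnion (anonClass L q ∩ ·) := by
    intro x hx
    have hxp : x ∈ nbhd L p := anonClass_subset_nbhd L ((mem_nbhd_comm L).1 hp) hx
    obtain ⟨-, l, hl, hpl, hxl⟩ := (mem_nbhd L).1 hxp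
    exact mem_biUnion.2 ⟨l, mem_filter.2 ⟨hl, hpl⟩, mem_inter.2 ⟨hx, hxl⟩⟩
  have hline : ∀ l ∈ {l ∈ L | p ∈ l}, (anonClass L q ∩ l).card ≤ 1 := by
    intro l hl
    refine card_le_one.2 fun x hx y hy => injOn_anonClass_of_mem L (mem_filter.1 hl).1
      (mem_inter.1 hx).2 (mem_inter.1 hy).2 ?_
    rw [(anonClass_eq_anonClass_iff L).2 ((mem_anonClass L).1 (mem_inter.1 hx).1),
      (anonClass_eq_anonClass_iff L).2 ((mem_anonClass L).1 (mem_inter.1 hy).1)]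
  calc (anonClass L q).card ≤ _ := card_le_card hsub
    _ ≤ {l ∈ L | p ∈ l}.card * 1 := card_biUnion_le_card_mul _ _ _ hline
    _ = r := by rw [hC.2.2.2.2.2.1 p, mul_one]

lemma IsConfiguration.mem_anonClass_union_nbhd (hC : IsConfiguration L v b r k) {x p y : P}
    (hx : ((nbhd L x).image (anonClass L)).card ≤ k - 1) (hp : p ∈ nbhd L x)
    (hy : y ∈ nbhd L x) : y ∈ anonClass L p ∪ nbhd L p := by
  obtain ⟨-, l, hl, hxl, hpl⟩ := (mem_nbhd L).1 hp
  have hsub : (l.erase x).image (anonClass L) ⊆ (nbhd L x).image (anonClass L) :=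
    image_subset_image fun z hz =>
      (mem_nbhd L).2 ⟨(mem_erase.1 hz).1, l, hl, hxl, (mem_erase.1 hz).2⟩
  have hinj : Set.InjOn (anonClass L) (l.erase x) :=
    (injOn_anonClass_of_mem L hl).mono (coe_subset.2 (erase_subset x l))
  have hcard : ((l.erase x).image (anonClass L)).card = k - 1 := by
    rw [card_image_of_injOn hinj,
      card_erase_of_mem hxl, hC.2.2.2.2.1 l hl]
  have heq := eq_of_subset_of_card_le hsub (hcard ▸ hx)
  obtain ⟨z, hz, hzy⟩ := mem_image.1 (heq ▸ mem_image_of_mem (anonClass L) hy)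
  have hyz : y ∈ anonClass L z := hzy ▸ mem_anonClass_self L y
  have hzl : z ∈ l := mem_of_mem_erase hz
  by_cases hzp : z = p
  · exact mem_union_left _ (hzp ▸ hyz)
  · have hzp : z ∈ nbhd L p := (mem_nbhd L).2 ⟨hzp, l, hl, hpl, hzl⟩
    exact mem_union_right _ (anonClass_subset_nbhd L hzp hyz)

lemma IsConfiguration.anonClass_union_nbhd_eq_univ (hC : IsConfiguration L v b r k)
    (hconn : ConfigConnected L) (hdeg : ∀ x : P, ((nbhd L x).image (anonClass L)).card ≤ k - 1)
    (p : P) : anonClass L p ∪ nbhd L p = univ := by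
  refine hconn.eq_univ_of_forall_mem_line (mem_union_left _ (mem_anonClass_self L p))
    fun x hx l hl hxl y hyl => ?_
  by_cases hyx : y = x
  · exact hyx ▸ hx
  have hy : y ∈ nbhd L x := (mem_nbhd L).2 ⟨hyx, l, hl, hxl, hyl⟩
  rcases mem_union.1 hx with hx | hx
  · rw [(mem_anonClass L).1 hx] at hy
    exact mem_union_right _ hy
  · exact hC.mem_anonClass_union_nbhd (hdeg x) ((mem_nbhd_comm L).1 hx) hy

variable {n : ℕ}

lemma IsConfiguration.mul_card_image_anonClass_nbhd (hC : IsConfiguration L v b r k)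
    (hclass : ∀ p : P, (anonClass L p).card = n) (p : P) :
    n * ((nbhd L p).image (anonClass L)).card = r * (k - 1) := by
  rw [← card_eq_mul_card_image_anonClass L hclass _ fun q hq => anonClass_subset_nbhd L hq,
    hC.card_nbhd]

lemma IsConfiguration.card_image_anonClass_eq_of_eq [Nonempty P]
    (hC : IsConfiguration L v b r k) (hconn : ConfigConnected L)
    (hclass : ∀ p : P, (anonClass L p).card = n) (hrn : r = n) :
    (univ.image (anonClass L)).card = k := by
  obtain ⟨p⟩ := ‹Nonempty P›
  have hn : 0 < n := hclass p ▸ card_anonClass_pos L p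
  have hk : 2 ≤ k := hC.2.2.1
  have hdeg : ∀ x : P, ((nbhd L x).image (anonClass L)).card ≤ k - 1 := fun x =>
    (Nat.eq_of_mul_eq_mul_left hn (hrn ▸ hC.mul_card_image_anonClass_nbhd hclass x)).le
  refine Nat.eq_of_mul_eq_mul_left hn ?_
  calc n * (univ.image (anonClass L)).card = (univ : Finset P).card :=
        (card_eq_mul_card_image_anonClass L hclass univ fun _ _ => subset_univ _).symm
    _ = (anonClass L p ∪ nbhd L p).card := by rw [hC.anonClass_union_nbhd_eq_univ hconn hdeg p]
    _ = n + n * (k - 1) := by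
        rw [card_union_of_disjoint (disjoint_anonClass_nbhd L p), hclass p, hC.card_nbhd, hrn]
    _ = n * k := by rw [add_comm, ← Nat.mul_add_one, Nat.sub_add_cancel (by omega : 1 ≤ k)]

lemma IsConfiguration.eq_of_card_image_anonClass_eq [Nonempty P]
    (hC : IsConfiguration L v b r k) (hclass : ∀ p : P, (anonClass L p).card = n)
    (hm : (univ.image (anonClass L)).card = k) : r = n := by
  obtain ⟨p⟩ := ‹Nonempty P›
  have hk : 2 ≤ k := hC.2.2.1
  have hlt := hm ▸ card_image_anonClass_nbhd_lt L p
  have hrn : r * (k - 1) ≤ n * (k - 1) :=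
    hC.mul_card_image_anonClass_nbhd hclass p ▸ Nat.mul_le_mul_left n (by omega)
  exact le_antisymm (Nat.le_of_mul_le_mul_right hrn (by omega))
    (hclass p ▸ hC.card_anonClass_le p)

end

/-- In a connected combinatorial `(v,b,r,k)`-configuration with `n`-anonymous
neighborhoods whose anonymity classes all have cardinality exactly `n`, we have
`r = n` if and only if the number of anonymity classes equals `k`. -/
theorem anonymous_neighborhoods_r_eq_n_iff {P : Type*} [Fintype P]
    [DecidableEq P] [Nonempty P] (L : Finset (Finset P)) (v b r k n : ℕ)
    (hconn : ConfigConnected L) (hC : IsConfiguration L v b r k)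
    (hclass : ∀ p : P, (anonClass L p).card = n) :
    r = n ↔ (Finset.univ.image fun p : P => anonClass L p).card = k :=
  ⟨hC.card_image_anonClass_eq_of_eq hconn hclass, hC.eq_of_card_image_anonClass_eq hclass⟩
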